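/- Let F : Θ → ℝ^m be continuous on a compact metric space Θ, let (ε_n) be a sequence of random vectors in ℝ^m with ε_n → 0 a.s., and let Q_n(θ) = ‖F(θ₀) - F(θ) + ε_n‖². If θ̂_n minimizes Q_n over Θ, then a.s. every limit point θ* of (θ̂_n) satisfies F(θ*) = F(θ₀). -/

import Mathlib

/-!
Comparing the least-squares criterion at `θhat n` with its value `‖ε n‖²` at `θ₀` gives
`‖F θ₀ - F (θhat n) + ε n‖ ≤ ‖ε n‖`, hence `‖F θ₀ - F (θhat n)‖ ≤ 2 ‖ε n‖ → 0`. So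
`F (θhat n) → F θ₀`, and by continuity `F` maps every cluster point of `θhat n` to a cluster
point of `F (θhat n)`, which can only be its limit.
-/

open MeasureTheory Filter Topology

theorem MapClusterPt.eq_of_tendsto {α X : Type*} [TopologicalSpace X] [T2Space X]
    {F : Filter α} {u : α → X} {x y : X} (hx : MapClusterPt x F u) (hu : Tendsto u F (𝓝 y)) :
    x = y :=
  eq_of_nhds_neBot (hx.clusterPt.mono hu)

theorem norm_le_two_mul_norm_of_norm_add_sq_le {E : Type*} [SeminormedAddCommGroup E]
    {a e : E} (h : ‖a + e‖ ^ 2 ≤ ‖e‖ ^ 2) : ‖a‖ ≤ 2 * ‖e‖ := by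
  have hae : ‖a + e‖ ≤ ‖e‖ := (sq_le_sq₀ (norm_nonneg _) (norm_nonneg _)).1 h
  calc ‖a‖ = ‖(a + e) - e‖ := by rw [add_sub_cancel_right]
    _ ≤ ‖a + e‖ + ‖e‖ := norm_sub_le _ _
    _ ≤ 2 * ‖e‖ := by linarith

theorem tendsto_zero_of_norm_add_sq_le {ι E : Type*} [SeminormedAddCommGroup E]
    {l : Filter ι} {a e : ι → E} (h : ∀ i, ‖a i + e i‖ ^ 2 ≤ ‖e i‖ ^ 2)
    (he : Tendsto e l (𝓝 0)) : Tendsto a l (𝓝 0) := by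
  refine squeeze_zero_norm (fun i => norm_le_two_mul_norm_of_norm_add_sq_le (h i)) ?_
  simpa using he.norm.const_mul 2

theorem abstract_least_squares_consistency_general
    {Θ : Type*} [MetricSpace Θ]
    {Ω : Type*} [MeasurableSpace Ω] (P : Measure Ω)
    (m : ℕ) (F : Θ → EuclideanSpace ℝ (Fin m)) (hF : Continuous F)
    (θ₀ : Θ)
    (ε : ℕ → Ω → EuclideanSpace ℝ (Fin m))
    (hε : ∀ᵐ ω ∂P, Tendsto (fun n => ε n ω) atTop (𝓝 0))
    (θhat : ℕ → Ω → Θ)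
    (hmin : ∀ n ω, ∀ θ : Θ,
      ‖F θ₀ - F (θhat n ω) + ε n ω‖ ^ 2 ≤ ‖F θ₀ - F θ + ε n ω‖ ^ 2) :
    ∀ᵐ ω ∂P, ∀ θstar : Θ,
      MapClusterPt θstar atTop (fun n => θhat n ω) → F θstar = F θ₀ := by
  filter_upwards [hε] with ω hω θstar hcp
  have hresid : Tendsto (fun n => F θ₀ - F (θhat n ω)) atTop (𝓝 0) :=
    tendsto_zero_of_norm_add_sq_le (fun n => by simpa using hmin n ω θ₀) hω
  have hfit : Tendsto (fun n => F (θhat n ω)) atTop (𝓝 (F θ₀)) := by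
    simpa using (tendsto_const_nhds (x := F θ₀)).sub hresid
  exact (hcp.continuousAt_comp hF.continuousAt).eq_of_tendsto hfit

/-- abstract least-squares consistency lemma. Let `F : Θ → ℝ^m` be
continuous on a compact metric space `Θ`, let `ε n` be random vectors with
`ε n → 0` a.s., and let `θhat n` minimize `θ ↦ ‖F θ₀ - F θ + ε n‖²` over `Θ`. Then
almost surely every limit point `θ*` of `(θhat n)` satisfies `F θ* = F θ₀`. -/
theorem abstract_least_squares_consistency
    {Θ : Type*} [MetricSpace Θ] [CompactSpace Θ]
    {Ω : Type*} [MeasurableSpace Ω] (P : Measure Ω)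
    (m : ℕ) (F : Θ → EuclideanSpace ℝ (Fin m)) (hF : Continuous F)
    (θ₀ : Θ)
    (ε : ℕ → Ω → EuclideanSpace ℝ (Fin m))
    (hε : ∀ᵐ ω ∂P, Tendsto (fun n => ε n ω) atTop (𝓝 0))
    (θhat : ℕ → Ω → Θ)
    (hmin : ∀ n ω, ∀ θ : Θ,
      ‖F θ₀ - F (θhat n ω) + ε n ω‖ ^ 2 ≤ ‖F θ₀ - F θ + ε n ω‖ ^ 2) :
    ∀ᵐ ω ∂P, ∀ θstar : Θ,
      MapClusterPt θstar atTop (fun n => θhat n ω) → F θstar = F θ₀ :=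
  abstract_least_squares_consistency_general P m F hF θ₀ ε hε θhat hmin
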